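/- arXiv:1709.03833 — 4 statements merged into one kernel-verified Lean document; each statement's English description precedes it below -/
import Mathlib

section
/- Let K be a field of characteristic ≠ 2, let E be an n-dimensional K-vector space with a quadratic form q whose associated bilinear form is b(x,y) = q(x+y) − q(x) − q(y), and let (e₁,…,eₙ) be a basis of E that is orthogonal for q, i.e. b(e_j,e_l) = 0 whenever j ≠ l. Then the family of products ι(e_{j₁})·ι(e_{j₂})·…·ι(e_{j_k}), indexed by all strictly increasing tuples 1 ≤ j₁ < j₂ < … < j_k ≤ n (including the empty product 1), is a basis of the Clifford algebra C(E,q) as a K-vector space. -/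
/-!
In characteristic `≠ 2`, Chevalley's isomorphism `equivExterior` identifies `C(E, q)` with the
exterior algebra `⋀ E` as a vector space: it is `changeForm` by the bilinear form `-½ b`, which
rewrites `ι m * x` as `m ∧ x` minus the contraction of `x` by `b(m, ·)`. For pairwise orthogonal
vectors all these contractions vanish, so the ordered product `ι e_{j₁} ⋯ ι e_{j_k}` is sent to
`e_{j₁} ∧ ⋯ ∧ e_{j_k}`, and these form the standard basis of `⋀ E`.
-/

open CliffordAlgebra

namespace CliffordAlgebra

variable {R M : Type*} [CommRing R] [AddCommGroup M] [Module R M]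

theorem contractLeft_list_prod_eq_zero {Q : QuadraticForm R M} (d : Module.Dual R M) :
    ∀ l : List M, (∀ m ∈ l, d m = 0) → contractLeft d (l.map (ι Q)).prod = 0
  | [], _ => by simp
  | m :: l, hl => by
    rw [List.map_cons, List.prod_cons, contractLeft_ι_mul, hl m List.mem_cons_self, zero_smul,
      contractLeft_list_prod_eq_zero d l fun m' hm' => hl m' (List.mem_cons_of_mem m hm'),
      mul_zero, sub_zero]

theorem changeForm_list_prod_of_pairwise {Q Q' : QuadraticForm R M}
    {B : LinearMap.BilinForm R M} (h : B.toQuadraticMap = Q' - Q) :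
    ∀ l : List M, l.Pairwise (fun a b => B a b = 0) →
      changeForm h (l.map (ι Q)).prod = (l.map (ι Q')).prod
  | [], _ => by simp
  | m :: l, hl => by
    obtain ⟨hm, hl⟩ := List.pairwise_cons.mp hl
    rw [List.map_cons, List.prod_cons, List.map_cons, List.prod_cons, changeForm_ι_mul,
      ← changeForm_contractLeft, contractLeft_list_prod_eq_zero _ l hm, map_zero, sub_zero,
      changeForm_list_prod_of_pairwise h l hl]

end CliffordAlgebra

theorem ExteriorAlgebra.basis_apply_eq_prod_sort {R M I : Type*} [CommRing R]
    [AddCommGroup M] [Module R M] [LinearOrder I] (b : Module.Basis I R M) (s : Finset I) :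
    b.ExteriorAlgebra s = ((s.sort (· ≤ ·)).map fun i => ExteriorAlgebra.ι R (b i)).prod := by
  rw [basis_apply_ofCard b rfl, ιMulti_family, ιMulti_apply, List.ofFn_eq_map,
    ← s.listMap_orderEmbOfFin_finRange rfl, List.map_map]
  rfl

/-- If `(e₁, …, eₙ)` is a `q`-orthogonal basis of an `n`-dimensional quadratic space
`(E, q)` over a field `K` of characteristic `≠ 2`, then the ordered products
`ι (e_{j₁}) * ⋯ * ι (e_{j_k})` over strictly increasing tuples
`1 ≤ j₁ < ⋯ < j_k ≤ n` (indexed below by the finite subsets of `Fin n`, the empty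
set giving the empty product `1`) form a basis of the Clifford algebra `C(E, q)`. -/
theorem clifford_basis_of_orthogonal_basis
    (K : Type*) [Field K] (hK : ringChar K ≠ 2)
    (E : Type*) [AddCommGroup E] [Module K E]
    (n : ℕ) (e : Module.Basis (Fin n) K E)
    (q : QuadraticForm K E)
    (horth : ∀ j l : Fin n, j ≠ l → QuadraticMap.polar q (e j) (e l) = 0) :
    ∃ b : Module.Basis (Finset (Fin n)) K (CliffordAlgebra q),
      ∀ s : Finset (Fin n),
        b s = ((s.sort (· ≤ ·)).map fun i => ι q (e i)).prod := by
  have : Invertible (2 : K) := invertibleOfNonzero (Ring.two_ne_zero hK)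
  refine ⟨e.ExteriorAlgebra.map (equivExterior q).symm, fun s => ?_⟩
  have hpair : ((s.sort (· ≤ ·)).map e).Pairwise
      fun x y => QuadraticMap.associated (-q) x y = 0 := by
    refine List.pairwise_map.mpr (s.sortedLT_sort.pairwise.imp fun hij => ?_)
    rw [map_neg, LinearMap.neg_apply, LinearMap.neg_apply, neg_eq_zero,
      QuadraticMap.associated_isOrtho, ← QuadraticMap.isOrtho_polarBilin]
    exact horth _ _ hij.ne
  have hchange := changeForm_list_prod_of_pairwise changeForm.associated_neg_proof _ hpair
  rw [List.map_map, List.map_map] at hchange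
  rw [Module.Basis.map_apply, LinearEquiv.symm_apply_eq, equivExterior, changeFormEquiv_apply,
    ExteriorAlgebra.basis_apply_eq_prod_sort]
  exact hchange.symm
end

section
/- Let Ω₀ and Ω₀* be open subsets of ℝⁿ, let f : ℝⁿ → ℝ be such that its gradient ∇f is differentiable on Ω₀, and let g : ℝⁿ → ℝⁿ map Ω₀* into Ω₀, be differentiable at every point of Ω₀*, and satisfy ∇f(g(x*)) = x* for all x* ∈ Ω₀*. Define F(x*) = f(g(x*)) − ⟨g(x*), x*⟩. Fix x* ∈ Ω₀* and suppose the Hessian f″(g(x*)) (the derivative of ∇f at g(x*), viewed as a continuous linear map ℝⁿ → ℝⁿ) is invertible. Then ∇F is differentiable at x* and F″(x*) = −( f″(g(x*)) )⁻¹ as continuous linear maps on ℝⁿ. -/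
open scoped RealInnerProductSpace Topology

/-!
Envelope argument: since `∇f (g y) = y`, the chain-rule terms involving `g'(y)` cancel in the
derivative of `F y = f (g y) - ⟪g y, y⟫`, so `∇F = -g` near `x*`. Since `g` is a continuous
right inverse of `∇f` near `x*`, its derivative there is the inverse of the Hessian `f''(g x*)`.
-/

section LegendreTransform

variable {E : Type*} [NormedAddCommGroup E] [InnerProductSpace ℝ E] [CompleteSpace E]

/-- With this sign convention, `legendreTransform f (∇f)⁻¹` is minus the convex conjugate
of `f`. -/
noncomputable def legendreTransform (f : E → ℝ) (g : E → E) (y : E) : ℝ :=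
  f (g y) - ⟪g y, y⟫

theorem hasGradientAt_legendreTransform {f : E → ℝ} {g : E → E} {y : E}
    (hf : HasGradientAt f y (g y)) (hg : DifferentiableAt ℝ g y) :
    HasGradientAt (legendreTransform f g) (-g y) y := by
  rw [hasGradientAt_iff_hasFDerivAt]
  have hg' := hg.hasFDerivAt
  refine ((hf.hasFDerivAt.comp y hg').sub (hg'.inner ℝ (hasFDerivAt_id y))).congr_fderiv ?_
  ext v
  simp [fderivInnerCLM, real_inner_comm]

theorem gradient_legendreTransform_eventuallyEq {f : E → ℝ} {g : E → E} {s : Set E} {x : E}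
    (hs : s ∈ 𝓝 x) (hf : ∀ y ∈ s, HasGradientAt f y (g y))
    (hg : ∀ y ∈ s, DifferentiableAt ℝ g y) :
    gradient (legendreTransform f g) =ᶠ[𝓝 x] fun y => -g y := by
  filter_upwards [hs] with y hy
  exact (hasGradientAt_legendreTransform (hf y hy) (hg y hy)).gradient

end LegendreTransform

theorem legendre_hessian_general
    (n : ℕ) (Ω₀ Ω₀s : Set (EuclideanSpace ℝ (Fin n)))
    (hΩ₀s : IsOpen Ω₀s)
    (f : EuclideanSpace ℝ (Fin n) → ℝ)
    (f' : EuclideanSpace ℝ (Fin n) → EuclideanSpace ℝ (Fin n))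
    (hf : ∀ x ∈ Ω₀, HasGradientAt f (f' x) x)
    (g : EuclideanSpace ℝ (Fin n) → EuclideanSpace ℝ (Fin n))
    (hg_maps : ∀ xs ∈ Ω₀s, g xs ∈ Ω₀)
    (hg_diff : ∀ xs ∈ Ω₀s, DifferentiableAt ℝ g xs)
    (hfg : ∀ xs ∈ Ω₀s, f' (g xs) = xs)
    (F : EuclideanSpace ℝ (Fin n) → ℝ)
    (hF : ∀ xs, F xs = f (g xs) - ⟪g xs, xs⟫)
    (xs : EuclideanSpace ℝ (Fin n)) (hxs : xs ∈ Ω₀s)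
    (H : EuclideanSpace ℝ (Fin n) ≃L[ℝ] EuclideanSpace ℝ (Fin n))
    (hH : HasFDerivAt f' (H : EuclideanSpace ℝ (Fin n) →L[ℝ] EuclideanSpace ℝ (Fin n)) (g xs)) :
    HasFDerivAt (fun y => gradient F y)
      (-(H.symm : EuclideanSpace ℝ (Fin n) →L[ℝ] EuclideanSpace ℝ (Fin n))) xs := by
  have hΩ₀s_nhds : Ω₀s ∈ 𝓝 xs := hΩ₀s.mem_nhds hxs
  have hF_eq : F = legendreTransform f g := funext hF
  have hgrad_g : ∀ y ∈ Ω₀s, HasGradientAt f y (g y) := fun y hy => by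
    simpa only [hfg y hy] using hf _ (hg_maps y hy)
  have hg_deriv : HasFDerivAt g (H.symm : _ →L[ℝ] _) xs :=
    HasFDerivAt.of_local_left_inverse (hg_diff xs hxs).continuousAt hH
      (Filter.mem_of_superset hΩ₀s_nhds hfg)
  subst hF_eq
  exact hg_deriv.neg.congr_of_eventuallyEq
    (gradient_legendreTransform_eventuallyEq hΩ₀s_nhds hgrad_g hg_diff)

/-- Legendre transform and inverse Hessians: if the gradient `f'` of `f` exists and is
differentiable on the open set `Ω₀ ⊆ ℝⁿ`, `g` maps the open set `Ω₀*` into `Ω₀`, is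
differentiable on `Ω₀*` and satisfies `∇f (g x*) = x*` there, and if the Hessian of `f`
at `g x*` (the Fréchet derivative `H` of `∇f` at `g x*`) is invertible, then the gradient
of the Legendre transform `F x* = f (g x*) - ⟪g x*, x*⟫` is differentiable at `x*` with
derivative `F'' (x*) = - H⁻¹`. -/
theorem legendre_hessian
    (n : ℕ) (Ω₀ Ω₀s : Set (EuclideanSpace ℝ (Fin n)))
    (hΩ₀ : IsOpen Ω₀) (hΩ₀s : IsOpen Ω₀s)
    (f : EuclideanSpace ℝ (Fin n) → ℝ)
    (f' : EuclideanSpace ℝ (Fin n) → EuclideanSpace ℝ (Fin n))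
    (hf : ∀ x ∈ Ω₀, HasGradientAt f (f' x) x)
    (hf'diff : ∀ x ∈ Ω₀, DifferentiableAt ℝ f' x)
    (g : EuclideanSpace ℝ (Fin n) → EuclideanSpace ℝ (Fin n))
    (hg_maps : ∀ xs ∈ Ω₀s, g xs ∈ Ω₀)
    (hg_diff : ∀ xs ∈ Ω₀s, DifferentiableAt ℝ g xs)
    (hfg : ∀ xs ∈ Ω₀s, f' (g xs) = xs)
    (F : EuclideanSpace ℝ (Fin n) → ℝ)
    (hF : ∀ xs, F xs = f (g xs) - ⟪g xs, xs⟫)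
    (xs : EuclideanSpace ℝ (Fin n)) (hxs : xs ∈ Ω₀s)
    (H : EuclideanSpace ℝ (Fin n) ≃L[ℝ] EuclideanSpace ℝ (Fin n))
    (hH : HasFDerivAt f' (H : EuclideanSpace ℝ (Fin n) →L[ℝ] EuclideanSpace ℝ (Fin n)) (g xs)) :
    HasFDerivAt (fun y => gradient F y)
      (-(H.symm : EuclideanSpace ℝ (Fin n) →L[ℝ] EuclideanSpace ℝ (Fin n))) xs :=
  legendre_hessian_general n Ω₀ Ω₀s hΩ₀s f f' hf g hg_maps hg_diff hfg F hF xs hxs H hH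
end

section
/- Let E and F be real normed spaces and let π denote the projective seminorm on E ⊗ F. Let (φₙ) be a sequence of linear maps E → E and (ψₙ) a sequence of linear maps F → F such that φₙ(x) → x for every x ∈ E and ψₙ(y) → y for every y ∈ F. Then for every z ∈ E ⊗ F, π(z − (φₙ ⊗ ψₙ)(z)) → 0 as n → ∞, where φₙ ⊗ ψₙ is the linear map on E ⊗ F induced by φₙ and ψₙ. In particular, if (e_j) and (f_k) are Schauder bases of E and F with coordinate expansions φₙ(x) = Σ_{j≤n} ζ_j(x) e_j and ψₙ(y) = Σ_{k≤n} η_k(y) f_k, the square partial sums Σ_{j,k≤n} ζ_j(x) η_k(y) (e_j ⊗ f_k) converge to x ⊗ y in the projective seminorm. -/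
open scoped TensorProduct

/-- The projective seminorm on the algebraic tensor product `E ⊗ F` of two real normed
spaces: `π z = inf { Σₖ ‖xₖ‖ * ‖yₖ‖ : z = Σₖ xₖ ⊗ yₖ }`, the infimum being taken over all
finite representations of `z` as a sum of elementary tensors. -/
noncomputable def projSeminorm {E F : Type*} [NormedAddCommGroup E] [NormedSpace ℝ E]
    [NormedAddCommGroup F] [NormedSpace ℝ F] (z : E ⊗[ℝ] F) : ℝ :=
  sInf {r : ℝ | ∃ l : List (E × F),
    z = (l.map fun w => w.1 ⊗ₜ[ℝ] w.2).sum ∧ r = (l.map fun w => ‖w.1‖ * ‖w.2‖).sum}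

lemma projSeminorm_aux_rep {E F : Type*} [NormedAddCommGroup E] [NormedSpace ℝ E]
    [NormedAddCommGroup F] [NormedSpace ℝ F] (φ : E →ₗ[ℝ] E) (ψ : F →ₗ[ℝ] F)
    (l : List (E × F)) :
    (l.map fun w => w.1 ⊗ₜ[ℝ] w.2).sum
        - TensorProduct.map φ ψ (l.map fun w => w.1 ⊗ₜ[ℝ] w.2).sum
      = ((l.flatMap fun w => [(w.1, w.2 - ψ w.2), (w.1 - φ w.1, ψ w.2)]).map
          fun w => w.1 ⊗ₜ[ℝ] w.2).sum := by
  induction l with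
  | nil => simp
  | cons w t ih =>
    simp only [List.map_cons, List.sum_cons, List.flatMap_cons, List.cons_append,
      List.map_append, List.sum_append, map_add, TensorProduct.map_tmul,
      TensorProduct.tmul_sub, TensorProduct.sub_tmul, List.nil_append]
    rw [← ih]
    abel

lemma projSeminorm_aux_norm {E F : Type*} [NormedAddCommGroup E] [NormedSpace ℝ E]
    [NormedAddCommGroup F] [NormedSpace ℝ F] (φ : E →ₗ[ℝ] E) (ψ : F →ₗ[ℝ] F)
    (l : List (E × F)) :
    ((l.flatMap fun w => [(w.1, w.2 - ψ w.2), (w.1 - φ w.1, ψ w.2)]).map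
        fun w => ‖w.1‖ * ‖w.2‖).sum
      = (l.map fun w => ‖w.1‖ * ‖w.2 - ψ w.2‖ + ‖w.1 - φ w.1‖ * ‖ψ w.2‖).sum := by
  induction l with
  | nil => simp
  | cons w t ih =>
    simp only [List.map_cons, List.sum_cons, List.flatMap_cons, List.cons_append,
      List.map_append, List.sum_append, List.nil_append] at *
    rw [ih]; ring

/-- If `(φₙ)` are linear maps `E → E` with `φₙ x → x` for every `x`, and `(ψₙ)` are linear
maps `F → F` with `ψₙ y → y` for every `y` (e.g. the partial-sum projections of Schauder
bases of `E` and `F`), then for every `z ∈ E ⊗ F` the tensors `(φₙ ⊗ ψₙ) z` converge to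
`z` in the projective seminorm: `π (z - (φₙ ⊗ ψₙ) z) → 0`. -/
theorem projSeminorm_tendsto_map
    (E F : Type*) [NormedAddCommGroup E] [NormedSpace ℝ E]
    [NormedAddCommGroup F] [NormedSpace ℝ F]
    (φ : ℕ → E →ₗ[ℝ] E) (ψ : ℕ → F →ₗ[ℝ] F)
    (hφ : ∀ x : E, Filter.Tendsto (fun n => φ n x) Filter.atTop (nhds x))
    (hψ : ∀ y : F, Filter.Tendsto (fun n => ψ n y) Filter.atTop (nhds y))
    (z : E ⊗[ℝ] F) :
    Filter.Tendsto (fun n => projSeminorm (z - TensorProduct.map (φ n) (ψ n) z))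
      Filter.atTop (nhds 0) := by
  have hrep : ∃ l : List (E × F), z = (l.map fun w => w.1 ⊗ₜ[ℝ] w.2).sum := by
    induction z with
    | zero => exact ⟨[], rfl⟩
    | tmul x y => exact ⟨[(x, y)], by simp⟩
    | add a b ha hb =>
      obtain ⟨la, ha⟩ := ha; obtain ⟨lb, hb⟩ := hb
      exact ⟨la ++ lb, by simp [ha, hb]⟩
  obtain ⟨l, hl⟩ := hrep
  set G : ℕ → ℝ := fun n =>
    (l.map fun w => ‖w.1‖ * ‖w.2 - ψ n w.2‖ + ‖w.1 - φ n w.1‖ * ‖ψ n w.2‖).sum with hG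
  have hnonneg : ∀ n, 0 ≤ projSeminorm (z - TensorProduct.map (φ n) (ψ n) z) := by
    intro n
    apply Real.sInf_nonneg
    rintro r ⟨m, -, rfl⟩
    apply List.sum_nonneg
    intro a ha
    obtain ⟨w, -, rfl⟩ := List.mem_map.1 ha
    positivity
  have hle : ∀ n, projSeminorm (z - TensorProduct.map (φ n) (ψ n) z) ≤ G n := by
    intro n
    apply csInf_le
    · refine ⟨0, ?_⟩
      rintro r ⟨m, -, rfl⟩
      apply List.sum_nonneg
      intro a ha
      obtain ⟨w, -, rfl⟩ := List.mem_map.1 ha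
      positivity
    · refine ⟨l.flatMap fun w => [(w.1, w.2 - ψ n w.2), (w.1 - φ n w.1, ψ n w.2)], ?_, ?_⟩
      · rw [hl]; exact projSeminorm_aux_rep (φ n) (ψ n) l
      · rw [hG]; exact (projSeminorm_aux_norm (φ n) (ψ n) l).symm
  have hGtendsto : Filter.Tendsto G Filter.atTop (nhds 0) := by
    rw [hG]
    clear hle hnonneg hG hl G
    induction l with
    | nil => simpa using tendsto_const_nhds
    | cons w t ih =>
      simp only [List.map_cons, List.sum_cons]
      have h1 : Filter.Tendsto (fun n => ‖w.1‖ * ‖w.2 - ψ n w.2‖)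
          Filter.atTop (nhds 0) := by
        have : Filter.Tendsto (fun n => w.2 - ψ n w.2) Filter.atTop (nhds 0) := by
          simpa using (hψ w.2).const_sub w.2
        simpa using tendsto_const_nhds.mul this.norm
      have h2 : Filter.Tendsto (fun n => ‖w.1 - φ n w.1‖ * ‖ψ n w.2‖)
          Filter.atTop (nhds 0) := by
        have h3 : Filter.Tendsto (fun n => w.1 - φ n w.1) Filter.atTop (nhds 0) := by
          simpa using (hφ w.1).const_sub w.1
        simpa using h3.norm.mul (hψ w.2).norm
      simpa using (h1.add h2).add ih
  exact squeeze_zero hnonneg hle hGtendsto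
end

section
/- Let E₁, E₂, E₃ be real normed spaces. The canonical linear equivalence (E₁ ⊗ E₂) ⊗ E₃ ≅ E₁ ⊗ (E₂ ⊗ E₃) (sending (x ⊗ y) ⊗ z to x ⊗ (y ⊗ z)) is isometric for the iterated projective seminorms: for every u ∈ (E₁ ⊗ E₂) ⊗ E₃, the projective seminorm of u computed on (E₁⊗E₂, π) ⊗ E₃ equals the projective seminorm of its image computed on E₁ ⊗ (E₂⊗E₃, π). In other words, (λ₁ π λ₂) π λ₃ = λ₁ π (λ₂ π λ₃). -/
open scoped TensorProduct

/-- The projective seminorm on the algebraic tensor product `G ⊗ H` of two real vector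
spaces, built from (semi)norm functions `p` on `G` and `q` on `H`:
`(p π q) z = inf { Σₖ p xₖ * q yₖ : z = Σₖ xₖ ⊗ yₖ }`, the infimum being taken over all
finite representations of `z` as a sum of elementary tensors. -/
noncomputable def projSem {G H : Type*} [AddCommGroup G] [Module ℝ G]
    [AddCommGroup H] [Module ℝ H] (p : G → ℝ) (q : H → ℝ) (z : G ⊗[ℝ] H) : ℝ :=
  sInf {r : ℝ | ∃ l : List (G × H),
    z = (l.map fun w => w.1 ⊗ₜ[ℝ] w.2).sum ∧ r = (l.map fun w => p w.1 * q w.2).sum}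

namespace ProjSemAux

variable {G H : Type*} [AddCommGroup G] [Module ℝ G] [AddCommGroup H] [Module ℝ H]

/-- The set over which the infimum defining `projSem` is taken. -/
def repSet (p : G → ℝ) (q : H → ℝ) (z : G ⊗[ℝ] H) : Set ℝ :=
  {r : ℝ | ∃ l : List (G × H),
    z = (l.map fun w => w.1 ⊗ₜ[ℝ] w.2).sum ∧ r = (l.map fun w => p w.1 * q w.2).sum}

lemma projSem_eq (p : G → ℝ) (q : H → ℝ) (z : G ⊗[ℝ] H) :
    projSem p q z = sInf (repSet p q z) := rfl

lemma exists_rep (z : G ⊗[ℝ] H) :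
    ∃ l : List (G × H), z = (l.map fun w => w.1 ⊗ₜ[ℝ] w.2).sum := by
  induction z using TensorProduct.induction_on with
  | zero => exact ⟨[], rfl⟩
  | tmul x y => exact ⟨[(x, y)], by simp⟩
  | add a b ha hb =>
    obtain ⟨l₁, h₁⟩ := ha
    obtain ⟨l₂, h₂⟩ := hb
    exact ⟨l₁ ++ l₂, by simp [h₁, h₂]⟩

lemma repSet_nonempty (p : G → ℝ) (q : H → ℝ) (z : G ⊗[ℝ] H) :
    (repSet p q z).Nonempty := by
  obtain ⟨l, hl⟩ := exists_rep z
  exact ⟨(l.map fun w => p w.1 * q w.2).sum, l, hl, rfl⟩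

lemma repSet_nonneg {p : G → ℝ} {q : H → ℝ} (hp : ∀ x, 0 ≤ p x) (hq : ∀ y, 0 ≤ q y)
    (z : G ⊗[ℝ] H) : ∀ r ∈ repSet p q z, 0 ≤ r := by
  rintro r ⟨l, -, rfl⟩
  refine List.sum_nonneg ?_
  intro a ha
  obtain ⟨w, -, rfl⟩ := List.mem_map.1 ha
  exact mul_nonneg (hp _) (hq _)

lemma repSet_bddBelow {p : G → ℝ} {q : H → ℝ} (hp : ∀ x, 0 ≤ p x) (hq : ∀ y, 0 ≤ q y)
    (z : G ⊗[ℝ] H) : BddBelow (repSet p q z) :=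
  ⟨0, fun r hr => repSet_nonneg hp hq z r hr⟩

lemma projSem_nonneg {p : G → ℝ} {q : H → ℝ} (hp : ∀ x, 0 ≤ p x) (hq : ∀ y, 0 ≤ q y)
    (z : G ⊗[ℝ] H) : 0 ≤ projSem p q z :=
  le_csInf (repSet_nonempty p q z) (repSet_nonneg hp hq z)

lemma projSem_tmul_le {p : G → ℝ} {q : H → ℝ} (hp : ∀ x, 0 ≤ p x) (hq : ∀ y, 0 ≤ q y)
    (x : G) (y : H) : projSem p q (x ⊗ₜ[ℝ] y) ≤ p x * q y :=
  csInf_le (repSet_bddBelow hp hq _) ⟨[(x, y)], by simp, by simp⟩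

lemma exists_rep_lt {p : G → ℝ} {q : H → ℝ} (hp : ∀ x, 0 ≤ p x) (hq : ∀ y, 0 ≤ q y)
    (z : G ⊗[ℝ] H) {ε : ℝ} (hε : 0 < ε) :
    ∃ l : List (G × H), z = (l.map fun w => w.1 ⊗ₜ[ℝ] w.2).sum ∧
      (l.map fun w => p w.1 * q w.2).sum < projSem p q z + ε := by
  obtain ⟨r, ⟨l, hl, hr⟩, hlt⟩ := Real.lt_sInf_add_pos (repSet_nonempty p q z) hε
  exact ⟨l, hl, hr ▸ hlt⟩

variable {E₁ E₂ E₃ : Type*}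
    [NormedAddCommGroup E₁] [NormedSpace ℝ E₁]
    [NormedAddCommGroup E₂] [NormedSpace ℝ E₂]
    [NormedAddCommGroup E₃] [NormedSpace ℝ E₃]

local notation "π₁₂" => projSem (fun x : E₁ => ‖x‖) (fun y : E₂ => ‖y‖)
local notation "π₂₃" => projSem (fun y : E₂ => ‖y‖) (fun z : E₃ => ‖z‖)

lemma keyA (l : List ((E₁ ⊗[ℝ] E₂) × E₃)) {ε : ℝ} (hε : 0 < ε) :
    ∃ m : List (E₁ × (E₂ ⊗[ℝ] E₃)),
      TensorProduct.assoc ℝ E₁ E₂ E₃ ((l.map fun w => w.1 ⊗ₜ[ℝ] w.2).sum)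
        = (m.map fun w => w.1 ⊗ₜ[ℝ] w.2).sum ∧
      (m.map fun w => ‖w.1‖ * π₂₃ w.2).sum
        ≤ (l.map fun w => π₁₂ w.1 * ‖w.2‖).sum + ε := by
  induction l generalizing ε with
  | nil => exact ⟨[], by simp, by simp; positivity⟩
  | cons a l ih =>
    obtain ⟨m, hm₁, hm₂⟩ := ih (half_pos hε)
    have hδ : (0 : ℝ) < ε / 2 / (‖a.2‖ + 1) := by positivity
    obtain ⟨la, hla₁, hla₂⟩ := exists_rep_lt (fun x : E₁ => norm_nonneg x)
      (fun y : E₂ => norm_nonneg y) a.1 hδ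
    refine ⟨la.map (fun w => (w.1, w.2 ⊗ₜ[ℝ] a.2)) ++ m, ?_, ?_⟩
    · rw [List.map_cons, List.sum_cons, map_add, hm₁, List.map_append, List.sum_append]
      congr 1
      rw [hla₁]
      have : ((la.map fun w => w.1 ⊗ₜ[ℝ] w.2).sum) ⊗ₜ[ℝ] a.2
          = (la.map fun w => (w.1 ⊗ₜ[ℝ] w.2) ⊗ₜ[ℝ] a.2).sum := by
        have := map_list_sum ((TensorProduct.mk ℝ (E₁ ⊗[ℝ] E₂) E₃).flip a.2)
          (la.map fun w => w.1 ⊗ₜ[ℝ] w.2)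
        simpa [List.map_map, Function.comp_def] using this
      rw [this, map_list_sum]
      simp [List.map_map, Function.comp_def]
    · rw [List.map_append, List.sum_append, List.map_cons, List.sum_cons]
      have h1 : ((la.map fun w => (w.1, w.2 ⊗ₜ[ℝ] a.2)).map
            fun w => ‖w.1‖ * π₂₃ w.2).sum
          ≤ π₁₂ a.1 * ‖a.2‖ + ε / 2 := by
        rw [List.map_map]
        have hle : ((la.map fun w => ‖w.1‖ * π₂₃ (w.2 ⊗ₜ[ℝ] a.2))).sum
            ≤ ((la.map fun w => ‖w.1‖ * ‖w.2‖ * ‖a.2‖)).sum := by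
          refine List.sum_le_sum ?_
          intro w _
          have := projSem_tmul_le (fun y : E₂ => norm_nonneg y)
            (fun z : E₃ => norm_nonneg z) w.2 a.2
          calc ‖w.1‖ * π₂₃ (w.2 ⊗ₜ[ℝ] a.2) ≤ ‖w.1‖ * (‖w.2‖ * ‖a.2‖) :=
                mul_le_mul_of_nonneg_left this (norm_nonneg _)
            _ = ‖w.1‖ * ‖w.2‖ * ‖a.2‖ := by ring
        have hsum : ((la.map fun w => ‖w.1‖ * ‖w.2‖ * ‖a.2‖)).sum
            = ((la.map fun w => ‖w.1‖ * ‖w.2‖)).sum * ‖a.2‖ :=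
          List.sum_map_mul_right _ _ _
        have hfin : ((la.map fun w => ‖w.1‖ * ‖w.2‖)).sum * ‖a.2‖
            ≤ π₁₂ a.1 * ‖a.2‖ + ε / 2 := by
          have h2 : ((la.map fun w => ‖w.1‖ * ‖w.2‖)).sum
              ≤ π₁₂ a.1 + ε / 2 / (‖a.2‖ + 1) := le_of_lt hla₂
          calc ((la.map fun w => ‖w.1‖ * ‖w.2‖)).sum * ‖a.2‖
              ≤ (π₁₂ a.1 + ε / 2 / (‖a.2‖ + 1)) * ‖a.2‖ :=
                mul_le_mul_of_nonneg_right h2 (norm_nonneg _)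
            _ = π₁₂ a.1 * ‖a.2‖ + ε / 2 / (‖a.2‖ + 1) * ‖a.2‖ := by ring
            _ ≤ π₁₂ a.1 * ‖a.2‖ + ε / 2 := by
                have : ε / 2 / (‖a.2‖ + 1) * ‖a.2‖ ≤ ε / 2 := by
                  rw [div_mul_eq_mul_div, div_le_iff₀ (by positivity)]
                  have h : ‖a.2‖ ≤ ‖a.2‖ + 1 := by linarith
                  calc ε / 2 * ‖a.2‖ ≤ ε / 2 * (‖a.2‖ + 1) :=
                        mul_le_mul_of_nonneg_left h (by positivity)
                    _ = ε / 2 * (‖a.2‖ + 1) := rfl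
                linarith
        simpa [Function.comp_def] using hle.trans (hsum ▸ hfin)
      linarith

lemma keyB (m : List (E₁ × (E₂ ⊗[ℝ] E₃))) {ε : ℝ} (hε : 0 < ε) :
    ∃ l : List ((E₁ ⊗[ℝ] E₂) × E₃),
      (TensorProduct.assoc ℝ E₁ E₂ E₃).symm ((m.map fun w => w.1 ⊗ₜ[ℝ] w.2).sum)
        = (l.map fun w => w.1 ⊗ₜ[ℝ] w.2).sum ∧
      (l.map fun w => π₁₂ w.1 * ‖w.2‖).sum
        ≤ (m.map fun w => ‖w.1‖ * π₂₃ w.2).sum + ε := by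
  induction m generalizing ε with
  | nil => exact ⟨[], by simp, by simp; positivity⟩
  | cons a m ih =>
    obtain ⟨l, hl₁, hl₂⟩ := ih (half_pos hε)
    have hδ : (0 : ℝ) < ε / 2 / (‖a.1‖ + 1) := by positivity
    obtain ⟨ma, hma₁, hma₂⟩ := exists_rep_lt (fun y : E₂ => norm_nonneg y)
      (fun z : E₃ => norm_nonneg z) a.2 hδ
    refine ⟨ma.map (fun w => (a.1 ⊗ₜ[ℝ] w.1, w.2)) ++ l, ?_, ?_⟩
    · rw [List.map_cons, List.sum_cons, map_add, hl₁, List.map_append, List.sum_append]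
      congr 1
      rw [hma₁]
      have : a.1 ⊗ₜ[ℝ] ((ma.map fun w => w.1 ⊗ₜ[ℝ] w.2).sum)
          = (ma.map fun w => a.1 ⊗ₜ[ℝ] (w.1 ⊗ₜ[ℝ] w.2)).sum := by
        have := map_list_sum (TensorProduct.mk ℝ E₁ (E₂ ⊗[ℝ] E₃) a.1)
          (ma.map fun w => w.1 ⊗ₜ[ℝ] w.2)
        simpa [List.map_map, Function.comp_def] using this
      rw [this, map_list_sum]
      simp [List.map_map, Function.comp_def]
    · rw [List.map_append, List.sum_append, List.map_cons, List.sum_cons]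
      have h1 : ((ma.map fun w => (a.1 ⊗ₜ[ℝ] w.1, w.2)).map
            fun w => π₁₂ w.1 * ‖w.2‖).sum
          ≤ ‖a.1‖ * π₂₃ a.2 + ε / 2 := by
        rw [List.map_map]
        have hle : ((ma.map fun w => π₁₂ (a.1 ⊗ₜ[ℝ] w.1) * ‖w.2‖)).sum
            ≤ ((ma.map fun w => ‖a.1‖ * (‖w.1‖ * ‖w.2‖))).sum := by
          refine List.sum_le_sum ?_
          intro w _
          have := projSem_tmul_le (fun x : E₁ => norm_nonneg x)
            (fun y : E₂ => norm_nonneg y) a.1 w.1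
          calc π₁₂ (a.1 ⊗ₜ[ℝ] w.1) * ‖w.2‖ ≤ (‖a.1‖ * ‖w.1‖) * ‖w.2‖ :=
                mul_le_mul_of_nonneg_right this (norm_nonneg _)
            _ = ‖a.1‖ * (‖w.1‖ * ‖w.2‖) := by ring
        have hsum : ((ma.map fun w => ‖a.1‖ * (‖w.1‖ * ‖w.2‖))).sum
            = ‖a.1‖ * ((ma.map fun w => ‖w.1‖ * ‖w.2‖)).sum :=
          List.sum_map_mul_left _ _ _
        have hfin : ‖a.1‖ * ((ma.map fun w => ‖w.1‖ * ‖w.2‖)).sum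
            ≤ ‖a.1‖ * π₂₃ a.2 + ε / 2 := by
          have h2 : ((ma.map fun w => ‖w.1‖ * ‖w.2‖)).sum
              ≤ π₂₃ a.2 + ε / 2 / (‖a.1‖ + 1) := le_of_lt hma₂
          calc ‖a.1‖ * ((ma.map fun w => ‖w.1‖ * ‖w.2‖)).sum
              ≤ ‖a.1‖ * (π₂₃ a.2 + ε / 2 / (‖a.1‖ + 1)) :=
                mul_le_mul_of_nonneg_left h2 (norm_nonneg _)
            _ = ‖a.1‖ * π₂₃ a.2 + ‖a.1‖ * (ε / 2 / (‖a.1‖ + 1)) := by ring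
            _ ≤ ‖a.1‖ * π₂₃ a.2 + ε / 2 := by
                have : ‖a.1‖ * (ε / 2 / (‖a.1‖ + 1)) ≤ ε / 2 := by
                  rw [mul_div_assoc', div_le_iff₀ (by positivity)]
                  nlinarith [norm_nonneg a.1, hε]
                linarith
        simpa [Function.comp_def] using hle.trans (hsum ▸ hfin)
      linarith

end ProjSemAux

/-- Associativity of the projective tensor seminorm: the canonical linear equivalence
`(E₁ ⊗ E₂) ⊗ E₃ ≃ E₁ ⊗ (E₂ ⊗ E₃)`, `(x ⊗ y) ⊗ z ↦ x ⊗ (y ⊗ z)`, is isometric for the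
iterated projective seminorms: `(λ₁ π λ₂) π λ₃ = λ₁ π (λ₂ π λ₃)`. -/
theorem projSem_assoc
    (E₁ E₂ E₃ : Type*)
    [NormedAddCommGroup E₁] [NormedSpace ℝ E₁]
    [NormedAddCommGroup E₂] [NormedSpace ℝ E₂]
    [NormedAddCommGroup E₃] [NormedSpace ℝ E₃]
    (u : (E₁ ⊗[ℝ] E₂) ⊗[ℝ] E₃) :
    projSem (projSem (fun x : E₁ => ‖x‖) (fun y : E₂ => ‖y‖)) (fun z : E₃ => ‖z‖) u
      = projSem (fun x : E₁ => ‖x‖) (projSem (fun y : E₂ => ‖y‖) (fun z : E₃ => ‖z‖))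
          (TensorProduct.assoc ℝ E₁ E₂ E₃ u) := by
  open ProjSemAux in
  have hπ₁₂ : ∀ w : E₁ ⊗[ℝ] E₂, 0 ≤ projSem (fun x : E₁ => ‖x‖) (fun y : E₂ => ‖y‖) w :=
    fun w => projSem_nonneg (fun x => norm_nonneg x) (fun y => norm_nonneg y) w
  have hπ₂₃ : ∀ v : E₂ ⊗[ℝ] E₃, 0 ≤ projSem (fun y : E₂ => ‖y‖) (fun z : E₃ => ‖z‖) v :=
    fun v => projSem_nonneg (fun y => norm_nonneg y) (fun z => norm_nonneg z) v
  have hn3 : ∀ z : E₃, (0:ℝ) ≤ ‖z‖ := fun z => norm_nonneg z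
  have hn1 : ∀ x : E₁, (0:ℝ) ≤ ‖x‖ := fun x => norm_nonneg x
  refine le_antisymm ?_ ?_
  · -- LHS ≤ RHS : use keyB
    rw [projSem_eq (fun x : E₁ => ‖x‖)
        (projSem (fun y : E₂ => ‖y‖) (fun z : E₃ => ‖z‖))]
    refine le_csInf (repSet_nonempty _ _ _) ?_
    rintro b ⟨m, hm, rfl⟩
    refine le_of_forall_pos_le_add fun ε hε => ?_
    obtain ⟨l, hl₁, hl₂⟩ := ProjSemAux.keyB (E₁ := E₁) (E₂ := E₂) (E₃ := E₃) m hε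
    have hu : u = (l.map fun w => w.1 ⊗ₜ[ℝ] w.2).sum := by
      have := hl₁
      rw [← hm] at this
      simpa using this
    calc projSem (projSem (fun x : E₁ => ‖x‖) (fun y : E₂ => ‖y‖)) (fun z : E₃ => ‖z‖) u
        ≤ (l.map fun w =>
            projSem (fun x : E₁ => ‖x‖) (fun y : E₂ => ‖y‖) w.1 * ‖w.2‖).sum :=
          csInf_le (repSet_bddBelow hπ₁₂ hn3 u) ⟨l, hu, rfl⟩
      _ ≤ (m.map fun w =>
            ‖w.1‖ * projSem (fun y : E₂ => ‖y‖) (fun z : E₃ => ‖z‖) w.2).sum + ε := hl₂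
  · -- RHS ≤ LHS : use keyA
    rw [projSem_eq (projSem (fun x : E₁ => ‖x‖) (fun y : E₂ => ‖y‖)) (fun z : E₃ => ‖z‖)]
    refine le_csInf (repSet_nonempty _ _ _) ?_
    rintro b ⟨l, hl, rfl⟩
    refine le_of_forall_pos_le_add fun ε hε => ?_
    obtain ⟨m, hm₁, hm₂⟩ := ProjSemAux.keyA (E₁ := E₁) (E₂ := E₂) (E₃ := E₃) l hε
    have hv : TensorProduct.assoc ℝ E₁ E₂ E₃ u = (m.map fun w => w.1 ⊗ₜ[ℝ] w.2).sum := by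
      rw [hl]; exact hm₁
    calc projSem (fun x : E₁ => ‖x‖) (projSem (fun y : E₂ => ‖y‖) (fun z : E₃ => ‖z‖))
          (TensorProduct.assoc ℝ E₁ E₂ E₃ u)
        ≤ (m.map fun w =>
            ‖w.1‖ * projSem (fun y : E₂ => ‖y‖) (fun z : E₃ => ‖z‖) w.2).sum :=
          csInf_le (repSet_bddBelow hn1 hπ₂₃ _) ⟨m, hv, rfl⟩
      _ ≤ (l.map fun w =>
            projSem (fun x : E₁ => ‖x‖) (fun y : E₂ => ‖y‖) w.1 * ‖w.2‖).sum + ε := hm₂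
end
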